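/- arXiv:1801.06891 — 5 statements merged into one kernel-verified Lean document; each statement's English description precedes it below -/
import Mathlib

section
/- Let α ∈ (1,2) and for integers k, n ≥ 1 and reals s, u > 0 define m_{k,n}(s,u) = Γ(k/α + n)·s^k·u^n / (π·k!·Γ(αn)). If n ≥ k/α, then m_{k,n+1}(s,u) < 2u·m_{k,n}(s,u)/(n−1)^(α−1) (for n ≥ 2). -/
lemma gamma_lb (y β : ℝ) (hy : 0 < y) (hβ0 : 0 < β) (hβ1 : β < 1) :
    y * Real.Gamma y * (y + β) ^ β ≤ Real.Gamma (y + β + 1) := by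
  have hyβ : 0 < y + β := by linarith
  have hyβ1 : 0 < y + β + 1 := by linarith
  have hΓa : 0 < Real.Gamma (y + β) := Real.Gamma_pos_of_pos hyβ
  have hΓb : 0 < Real.Gamma (y + β + 1) := Real.Gamma_pos_of_pos hyβ1
  have hΓ1 : 0 < Real.Gamma (y + 1) := Real.Gamma_pos_of_pos (by linarith)
  have hc := Real.convexOn_log_Gamma.2 (Set.mem_Ioi.2 hyβ) (Set.mem_Ioi.2 hyβ1)
    hβ0.le (by linarith : (0:ℝ) ≤ 1 - β) (by ring)
  simp only [Function.comp_apply, smul_eq_mul] at hc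
  have harg : β * (y + β) + (1 - β) * (y + β + 1) = y + 1 := by ring
  rw [harg] at hc
  have h2 : Real.Gamma (y + 1) ≤
      Real.Gamma (y + β) ^ β * Real.Gamma (y + β + 1) ^ (1 - β) := by
    have := Real.exp_le_exp.2 hc
    rw [Real.exp_log hΓ1, Real.exp_add] at this
    rwa [Real.rpow_def_of_pos hΓa, Real.rpow_def_of_pos hΓb, mul_comm (Real.log _) β,
      mul_comm (Real.log _) (1 - β)]
  have hb : Real.Gamma (y + β + 1) = (y + β) * Real.Gamma (y + β) := by
    rw [Real.Gamma_add_one hyβ.ne']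
  rw [hb, Real.mul_rpow hyβ.le hΓa.le, ← mul_assoc, mul_comm (Real.Gamma (y+β) ^ β),
    mul_assoc, ← Real.rpow_add hΓa] at h2
  simp only [add_sub_cancel, Real.rpow_one] at h2
  have h3 : y * Real.Gamma y ≤ (y + β) ^ (1 - β) * Real.Gamma (y + β) := by
    rwa [Real.Gamma_add_one hy.ne'] at h2
  have h4 := mul_le_mul_of_nonneg_right h3 (Real.rpow_nonneg hyβ.le β)
  calc y * Real.Gamma y * (y + β) ^ β
      ≤ (y + β) ^ (1 - β) * Real.Gamma (y + β) * (y + β) ^ β := h4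
    _ = Real.Gamma (y + β) * ((y + β) ^ (1 - β) * (y + β) ^ β) := by ring
    _ = Real.Gamma (y + β + 1) := by
        rw [← Real.rpow_add hyβ]
        simp [hb, mul_comm]

theorem stmt_3 (α s u : ℝ) (hα : 1 < α ∧ α < 2) (hs : 0 < s) (hu : 0 < u)
    (m : ℕ → ℕ → ℝ)
    (hm : ∀ k n : ℕ, m k n =
      Real.Gamma ((k : ℝ)/α + n) * s^k * u^n /
        (Real.pi * (Nat.factorial k) * Real.Gamma (α * n)))
    (k n : ℕ) (hk : 1 ≤ k) (hn : 2 ≤ n) (hkn : (k : ℝ)/α ≤ n) :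
    m k (n+1) < 2 * u * m k n / ((n : ℝ) - 1) ^ (α - 1) := by
  obtain ⟨hα1, hα2⟩ := hα
  have hα0 : 0 < α := by linarith
  have hn1 : (1:ℝ) ≤ (n:ℝ) - 1 := by
    have : (2:ℝ) ≤ (n:ℝ) := by exact_mod_cast hn
    linarith
  have hnpos : (0:ℝ) < n := by linarith
  have hx : (0:ℝ) < α * n := by positivity
  have hc0 : (0:ℝ) < (k:ℝ)/α + n := by positivity
  -- key inequality
  have hKEY : ((k:ℝ)/α + n) * ((n:ℝ) - 1) ^ (α - 1) * Real.Gamma (α * n)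
      < 2 * Real.Gamma (α * n + α) := by
    have hβ0 : (0:ℝ) < α - 1 := by linarith
    have hβ1 : α - 1 < 1 := by linarith
    have hlb := gamma_lb (α * n) (α - 1) hx hβ0 hβ1
    have heq : α * n + (α - 1) + 1 = α * n + α := by ring
    rw [heq] at hlb
    have hΓx : 0 < Real.Gamma (α * n) := Real.Gamma_pos_of_pos hx
    have hrlt : ((n:ℝ) - 1) ^ (α - 1) < (α * n + (α - 1)) ^ (α - 1) := by
      apply Real.rpow_lt_rpow (by linarith) _ hβ0
      nlinarith
    have hrpos : (0:ℝ) < ((n:ℝ) - 1) ^ (α - 1) :=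
      Real.rpow_pos_of_pos (by linarith) _
    have h2n : ((k:ℝ)/α + n) ≤ 2 * n := by linarith
    have hstep : ((k:ℝ)/α + n) * ((n:ℝ) - 1) ^ (α - 1)
        < 2 * (α * n) * (α * n + (α - 1)) ^ (α - 1) := by
      have hpos2 : (0:ℝ) < (α * n + (α - 1)) ^ (α - 1) :=
        Real.rpow_pos_of_pos (by nlinarith) _
      have : ((k:ℝ)/α + n) * ((n:ℝ) - 1) ^ (α - 1) ≤ 2 * n * ((n:ℝ) - 1) ^ (α - 1) :=
        mul_le_mul_of_nonneg_right h2n hrpos.le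
      have h2 : 2 * (n:ℝ) * ((n:ℝ) - 1) ^ (α - 1) < 2 * (α * n) * (α * n + (α - 1)) ^ (α - 1) := by
        apply mul_lt_mul' _ hrlt hrpos.le (by nlinarith)
        nlinarith
      linarith
    calc ((k:ℝ)/α + n) * ((n:ℝ) - 1) ^ (α - 1) * Real.Gamma (α * n)
        < 2 * (α * n) * (α * n + (α - 1)) ^ (α - 1) * Real.Gamma (α * n) :=
          mul_lt_mul_of_pos_right hstep hΓx
      _ = 2 * (α * n * Real.Gamma (α * n) * (α * n + (α - 1)) ^ (α - 1)) := by ring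
      _ ≤ 2 * Real.Gamma (α * n + α) := by linarith [hlb]
  -- now the main goal
  rw [hm k (n+1), hm k n]
  have hπ : (0:ℝ) < Real.pi := Real.pi_pos
  have hfac : (0:ℝ) < (Nat.factorial k : ℝ) := by positivity
  have hΓx : 0 < Real.Gamma (α * n) := Real.Gamma_pos_of_pos hx
  have hΓc : 0 < Real.Gamma ((k:ℝ)/α + n) := Real.Gamma_pos_of_pos hc0
  have hcast1 : ((k:ℝ)/α + ((n+1 : ℕ) : ℝ)) = ((k:ℝ)/α + n) + 1 := by push_cast; ring
  have hcast2 : α * ((n+1 : ℕ) : ℝ) = α * n + α := by push_cast; ring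
  rw [hcast1, hcast2, Real.Gamma_add_one hc0.ne']
  have hΓ2 : 0 < Real.Gamma (α * n + α) := Real.Gamma_pos_of_pos (by nlinarith)
  have hrpos : (0:ℝ) < ((n:ℝ) - 1) ^ (α - 1) :=
    Real.rpow_pos_of_pos (by linarith) _
  rw [div_lt_div_iff₀ (by positivity) hrpos, ← mul_div_assoc, div_mul_eq_mul_div,
    lt_div_iff₀ (by positivity)]
  have hpos : (0:ℝ) < Real.Gamma ((k:ℝ)/α + n) * s^k * u^n * u * (Real.pi * (Nat.factorial k)) := by positivity
  calc ((k:ℝ)/α + n) * Real.Gamma ((k:ℝ)/α + n) * s ^ k * u ^ (n+1) * ((n:ℝ) - 1) ^ (α - 1) *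
        (Real.pi * (Nat.factorial k) * Real.Gamma (α * n))
      = (Real.Gamma ((k:ℝ)/α + n) * s^k * u^n * u * (Real.pi * (Nat.factorial k))) *
        (((k:ℝ)/α + n) * ((n:ℝ) - 1) ^ (α - 1) * Real.Gamma (α * n)) := by ring
    _ < (Real.Gamma ((k:ℝ)/α + n) * s^k * u^n * u * (Real.pi * (Nat.factorial k))) *
        (2 * Real.Gamma (α * n + α)) := by
          exact mul_lt_mul_of_pos_left hKEY hpos
    _ = 2 * u * (Real.Gamma ((k:ℝ)/α + n) * s ^ k * u ^ n) * (Real.pi * (Nat.factorial k) * Real.Gamma (α * n + α)) := by ring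
end

section
/- Let α ∈ (1,2) and for integers k, n ≥ 1 and reals s, u > 0 define m_{k,n}(s,u) = Γ(k/α + n)·s^k·u^n / (π·k!·Γ(αn)). If n ≤ (2 − 1/α)·(k+1), then m_{k+1,n}(s,u) < 2s·m_{k,n}(s,u)/(k+1)^(1 − 1/α). -/
/-!
Write `x = k/α + n` and `t = 1/α ∈ (0, 1)`, so that
`m (k+1) n / m k n = s · Γ(x + t) / ((k+1) Γ(x))`. Log-convexity of `Γ` between `x` and `x + 1`
gives `Γ(x + t) ≤ Γ(x) x^t`, and the hypothesis on `n` forces `x < 2(k+1)`, whence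
`x^t < 2 (k+1)^t`.
-/

open Real Nat

lemma Real.Gamma_add_le_Gamma_mul_rpow {x t : ℝ} (hx : 0 < x) (ht₀ : 0 < t) (ht₁ : t < 1) :
    Gamma (x + t) ≤ Gamma x * x ^ t := by
  have hΓ : 0 < Gamma x := Gamma_pos_of_pos hx
  calc Gamma (x + t) = Gamma ((1 - t) * x + t * (x + 1)) := by ring_nf
    _ ≤ Gamma x ^ (1 - t) * Gamma (x + 1) ^ t :=
      Gamma_mul_add_mul_le_rpow_Gamma_mul_rpow_Gamma hx (by linarith) (by linarith) ht₀
        (by ring)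
    _ = Gamma x * x ^ t := by
      rw [Gamma_add_one hx.ne', mul_rpow hx.le hΓ.le, mul_left_comm, ← rpow_add hΓ,
        sub_add_cancel, rpow_one, mul_comm]

lemma Real.Gamma_add_mul_rpow_lt {x t c : ℝ} (hx : 0 < x) (hxc : x < 2 * c) (ht₀ : 0 < t)
    (ht₁ : t < 1) : Gamma (x + t) * c ^ (1 - t) < 2 * c * Gamma x := by
  have hc : 0 < c := by linarith
  have hΓ : 0 < Gamma x := Gamma_pos_of_pos hx
  have hpow : x ^ t < 2 * c ^ t :=
    calc x ^ t < (2 * c) ^ t := rpow_lt_rpow hx.le hxc ht₀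
      _ = 2 ^ t * c ^ t := mul_rpow zero_le_two hc.le
      _ ≤ 2 * c ^ t := by
        gcongr
        simpa using rpow_le_rpow_of_exponent_le one_le_two ht₁.le
  calc Gamma (x + t) * c ^ (1 - t) ≤ Gamma x * x ^ t * c ^ (1 - t) := by
        gcongr; exact Gamma_add_le_Gamma_mul_rpow hx ht₀ ht₁
    _ < Gamma x * (2 * c ^ t) * c ^ (1 - t) := by gcongr
    _ = 2 * c * Gamma x := by
      rw [mul_assoc, mul_assoc, ← rpow_add hc, add_sub_cancel, rpow_one]; ring

theorem stmt_4_general (α s u : ℝ) (hα : 1 < α ∧ α < 2) (hs : 0 < s) (hu : 0 < u)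
    (m : ℕ → ℕ → ℝ)
    (hm : ∀ k n : ℕ, m k n =
      Real.Gamma ((k : ℝ)/α + n) * s^k * u^n /
        (Real.pi * (Nat.factorial k) * Real.Gamma (α * n)))
    (k n : ℕ) (hn : 1 ≤ n)
    (hkn : (n : ℝ) ≤ (2 - 1/α) * ((k : ℝ) + 1)) :
    m (k+1) n < 2 * s * m k n / ((k : ℝ) + 1) ^ (1 - 1/α) := by
  have hα₀ : 0 < α := by linarith [hα.1]
  have hn₀ : (0 : ℝ) < n := by exact_mod_cast hn
  have hx : 0 < (k : ℝ) / α + n := by positivity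
  have hxk : (k : ℝ) / α + n < 2 * ((k : ℝ) + 1) := by
    have : (k : ℝ) / α + (2 - 1 / α) * (k + 1) = 2 * (k + 1) - 1 / α := by field_simp; ring
    have : 0 < 1 / α := by positivity
    linarith
  have key := Gamma_add_mul_rpow_lt hx hxk (by positivity : 0 < 1 / α)
    ((div_lt_one hα₀).2 hα.1)
  have hshift : ((k + 1 : ℕ) : ℝ) / α + n = (k / α + n) + 1 / α := by push_cast; ring
  have hΓn : 0 < Gamma (α * n) := Gamma_pos_of_pos (by positivity)
  have hkt : 0 < ((k : ℝ) + 1) ^ (1 - 1 / α) := rpow_pos_of_pos (by positivity) _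
  rw [hm, hm, hshift, Nat.factorial_succ, lt_div_iff₀ hkt]
  push_cast
  generalize Gamma (k / α + n + 1 / α) = A, Gamma (k / α + n) = B at key ⊢
  set q := s ^ (k + 1) * u ^ n / (π * ((k + 1) * k !) * Gamma (α * n)) with hq
  calc A * s ^ (k + 1) * u ^ n / (π * ((k + 1) * k !) * Gamma (α * n)) * (k + 1) ^ (1 - 1 / α)
      = A * (k + 1) ^ (1 - 1 / α) * q := by ring
    _ < 2 * (k + 1) * B * q := mul_lt_mul_of_pos_right key (by positivity)
    _ = 2 * s * (B * s ^ k * u ^ n / (π * k ! * Gamma (α * n))) := by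
        rw [hq]; field_simp; ring

theorem stmt_4 (α s u : ℝ) (hα : 1 < α ∧ α < 2) (hs : 0 < s) (hu : 0 < u)
    (m : ℕ → ℕ → ℝ)
    (hm : ∀ k n : ℕ, m k n =
      Real.Gamma ((k : ℝ)/α + n) * s^k * u^n /
        (Real.pi * (Nat.factorial k) * Real.Gamma (α * n)))
    (k n : ℕ) (hk : 1 ≤ k) (hn : 1 ≤ n)
    (hkn : (n : ℝ) ≤ (2 - 1/α) * ((k : ℝ) + 1)) :
    m (k+1) n < 2 * s * m k n / ((k : ℝ) + 1) ^ (1 - 1/α) :=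
  stmt_4_general α s u hα hs hu m hm k n hn hkn
end

section
/- For α ∈ (1,2), the double series ∑_{k≥1,n≥1} Γ(k/α + n)·M^{k/α + n} / (Γ(αn)·k!) converges for every M > 0, and its sum is at most ∫₀^∞ E_{α,α}(s)·e^{s^{1/α} − s/M} ds, where E_{α,α}(s) = ∑_{n≥0} s^n/Γ(αn + α). -/
open MeasureTheory

namespace Stmt5Aux

open Set

lemma gamma_mono {x y : ℝ} (hx : 2 ≤ x) (hxy : x ≤ y) : Real.Gamma x ≤ Real.Gamma y :=
  Real.Gamma_strictMonoOn_Ici.monotoneOn hx (le_trans hx hxy) hxy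

lemma gamma_ge_floor_fact {α : ℝ} (hα1 : 1 < α) {n : ℕ} (hn : 1 ≤ n) :
    ((Nat.floor (α * n)).factorial : ℝ) ≤ Real.Gamma (α * n + α) := by
  have hα0 : (0:ℝ) < α := by linarith
  have h1 : (1:ℝ) ≤ α * n := by
    have : (1:ℝ) ≤ (n:ℝ) := by exact_mod_cast hn
    nlinarith
  have hm1 : 1 ≤ Nat.floor (α * n) := Nat.le_floor (by exact_mod_cast h1)
  have hfl : ((Nat.floor (α * n) : ℝ)) ≤ α * n := Nat.floor_le (by linarith)
  rw [← Real.Gamma_nat_eq_factorial]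
  apply gamma_mono
  · have : (1:ℝ) ≤ (Nat.floor (α * n) : ℝ) := by exact_mod_cast hm1
    linarith
  · push_cast; linarith

lemma summable_v {α : ℝ} (hα1 : 1 < α) {t : ℝ} (ht : 0 ≤ t) :
    Summable (fun n : ℕ => t ^ n / Real.Gamma (α * n + α)) := by
  have hα0 : (0:ℝ) < α := by linarith
  have hΓnn : ∀ n : ℕ, 0 < Real.Gamma (α * n + α) := by
    intro n
    apply Real.Gamma_pos_of_pos
    have : (0:ℝ) ≤ α * n := by positivity
    linarith
  apply Summable.of_nonneg_of_le
    (g := fun n : ℕ => t ^ n / Real.Gamma (α * n + α))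
    (f := fun n : ℕ => (max 1 (1 / Real.Gamma α)) * (t ^ n / n.factorial))
  · intro n; exact div_nonneg (pow_nonneg ht n) (hΓnn n).le
  · intro n
    rcases Nat.eq_zero_or_pos n with rfl | hn
    · simp only [pow_zero, Nat.cast_zero, mul_zero, zero_add, Nat.factorial_zero, Nat.cast_one,
        div_one, mul_one]
      exact le_max_right _ _
    · have hfact : ((n).factorial : ℝ) ≤ Real.Gamma (α * n + α) := by
        refine le_trans ?_ (gamma_ge_floor_fact hα1 hn)
        exact_mod_cast Nat.factorial_le (Nat.le_floor (by
          push_cast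
          nlinarith [(Nat.cast_pos (α := ℝ)).mpr hn]))
      have h0 : (0:ℝ) < (n).factorial := by positivity
      calc t ^ n / Real.Gamma (α * n + α) ≤ (t ^ n : ℝ) / (n.factorial : ℝ) := by
            apply div_le_div_of_nonneg_left (pow_nonneg ht n) h0 hfact
        _ ≤ (max 1 (1 / Real.Gamma α)) * (t ^ n / n.factorial) := by
            apply le_mul_of_one_le_left (by positivity) (le_max_left _ _)
  · exact (Real.summable_pow_div_factorial t).mul_left _


lemma exp_tsum (w : ℝ) : (∑' k : ℕ, w ^ k / k.factorial) = Real.exp w := by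
  rw [Real.exp_eq_exp_ℝ, NormedSpace.exp_eq_tsum_div]

lemma sublinear {α : ℝ} (hα1 : 1 < α) {ε : ℝ} (hε : 0 < ε) :
    ∃ K : ℝ, 0 ≤ K ∧ ∀ t : ℝ, 0 ≤ t → t ^ (1/α) ≤ ε * t + K := by
  have hα0 : (0:ℝ) < α := by linarith
  have hlt : 1/α - 1 < 0 := by
    have : 1/α < 1 := by rw [div_lt_one hα0]; exact hα1
    linarith
  set T : ℝ := ε ^ (1/(1/α - 1)) with hTdef
  have hT0 : 0 < T := Real.rpow_pos_of_pos hε _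
  refine ⟨T ^ (1/α), Real.rpow_nonneg hT0.le _, fun t ht => ?_⟩
  rcases le_total t T with h | h
  · have : t ^ (1/α) ≤ T ^ (1/α) := Real.rpow_le_rpow ht h (by positivity)
    have h2 : 0 ≤ ε * t := by positivity
    linarith
  · have ht0 : 0 < t := lt_of_lt_of_le hT0 h
    have key : t ^ (1/α) = t * t ^ (1/α - 1) := by
      rw [show (1/α : ℝ) = 1 + (1/α - 1) by ring, Real.rpow_add ht0, Real.rpow_one]
      ring_nf
    have hanti : t ^ (1/α - 1) ≤ T ^ (1/α - 1) :=
      Real.antitoneOn_rpow_Ioi_of_exponent_nonpos hlt.le (mem_Ioi.mpr hT0) (mem_Ioi.mpr ht0) h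
    have hTe : T ^ (1/α - 1) = ε := by
      rw [hTdef, ← Real.rpow_mul hε.le, one_div_mul_cancel hlt.ne, Real.rpow_one]
    have : t ^ (1/α) ≤ t * ε := by
      rw [key]
      exact mul_le_mul_of_nonneg_left (by rw [← hTe]; exact hanti) ht0.le
    have hK : 0 ≤ T ^ (1/α) := Real.rpow_nonneg hT0.le _
    nlinarith

lemma term_integral {M z : ℝ} (hM : 0 < M) (hz : 0 < z) :
    IntegrableOn (fun t : ℝ => t ^ (z - 1) * Real.exp (-(M⁻¹ * t))) (Ioi 0) ∧
    ∫ t in Ioi 0, t ^ (z - 1) * Real.exp (-(M⁻¹ * t)) = Real.Gamma z * M ^ z := by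
  have hr : (0:ℝ) < M⁻¹ := by positivity
  constructor
  · have h0 : IntegrableOn (fun x : ℝ => Real.exp (-x) * x ^ (z - 1)) (Ioi 0) :=
      Real.GammaIntegral_convergent hz
    have h1 : IntegrableOn (fun t : ℝ => Real.exp (-(M⁻¹ * t)) * (M⁻¹ * t) ^ (z - 1))
        (Ioi 0) := by
      have := (integrableOn_Ioi_comp_mul_left_iff
        (fun x : ℝ => Real.exp (-x) * x ^ (z - 1)) 0 hr).mpr (by simpa using h0)
      simpa using this
    have h2 := h1.const_mul ((M⁻¹) ^ (1 - z) : ℝ)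
    refine MeasureTheory.IntegrableOn.congr_fun h2 (fun t ht => ?_) measurableSet_Ioi
    have ht0 : (0:ℝ) < t := ht
    rw [Real.mul_rpow hr.le ht0.le]
    rw [show (M⁻¹:ℝ) ^ (1 - z) * (Real.exp (-(M⁻¹ * t)) * ((M⁻¹:ℝ) ^ (z-1) * t ^ (z-1)))
        = ((M⁻¹:ℝ) ^ (1 - z) * (M⁻¹:ℝ) ^ (z-1)) * (t ^ (z-1) * Real.exp (-(M⁻¹ * t))) by ring,
      ← Real.rpow_add hr]
    norm_num
  · rw [Real.integral_rpow_mul_exp_neg_mul_Ioi hz hr, one_div, inv_inv, mul_comm]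

lemma E_le {α : ℝ} (hα1 : 1 < α) {t : ℝ} (ht : 0 ≤ t) :
    (∑' n : ℕ, t ^ n / Real.Gamma (α * n + α)) ≤
      (1 / Real.Gamma α + 1) * Real.exp (1 + 2 * t ^ (1/α)) := by
  have hα0 : (0:ℝ) < α := by linarith
  have hΓα : 0 < Real.Gamma α := Real.Gamma_pos_of_pos hα0
  set u : ℝ := max t 1 with hu
  have hu1 : 1 ≤ u := le_max_right _ _
  have hu0 : (0:ℝ) < u := lt_of_lt_of_le one_pos hu1
  set w : ℝ := u ^ (1/α) with hwdef
  have hw1 : 1 ≤ w := Real.one_le_rpow hu1 (by positivity)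
  have hw0 : 0 < w := lt_of_lt_of_le one_pos hw1
  set m : ℕ → ℕ := fun n => Nat.floor (α * n) with hm
  have hminj : Function.Injective m := by
    have : StrictMono m := by
      apply strictMono_nat_of_lt_succ
      intro n
      have h1 : (↑(m n + 1) : ℝ) ≤ α * (n + 1 : ℕ) := by
        push_cast
        have := Nat.floor_le (by positivity : (0:ℝ) ≤ α * n)
        simp only [hm]
        nlinarith
      exact Nat.lt_of_lt_of_le (Nat.lt_succ_self _) (Nat.le_floor h1)
    exact this.injective
  set C : ℝ := 1 / Real.Gamma α + w with hC
  have hC0 : 0 < C := by positivity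
  have hterm : ∀ n : ℕ, t ^ n / Real.Gamma (α * n + α) ≤
      C * (w ^ (m n) / (m n).factorial) := by
    intro n
    rcases Nat.eq_zero_or_pos n with rfl | hn
    · have hm0 : m 0 = 0 := by simp [hm]
      simp only [hm0, pow_zero, Nat.cast_zero, mul_zero, zero_add, Nat.factorial_zero,
        Nat.cast_one, div_one, mul_one, hC]
      have : 0 < w := hw0
      linarith
    · have hup : t ^ n ≤ w ^ (m n + 1) := by
        have h1 : t ^ n ≤ u ^ n := pow_le_pow_left₀ ht (le_max_left _ _) n
        have h2 : (u : ℝ) ^ (n:ℝ) ≤ u ^ (((m n : ℝ) + 1) / α) := by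
          apply Real.rpow_le_rpow_of_exponent_le hu1
          rw [le_div_iff₀ hα0]
          have := (Nat.lt_floor_add_one (α * n)).le
          simp only [hm]
          push_cast
          linarith [this]
        have h3 : u ^ (((m n : ℝ) + 1) / α) = w ^ (m n + 1) := by
          rw [hwdef, ← Real.rpow_natCast (u ^ (1/α)) (m n + 1), ← Real.rpow_mul hu0.le]
          congr 1
          push_cast
          ring
        calc t ^ n ≤ u ^ n := h1
          _ = u ^ (n:ℝ) := by rw [Real.rpow_natCast]
          _ ≤ u ^ (((m n : ℝ) + 1) / α) := h2
          _ = w ^ (m n + 1) := h3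
      have hΓ : ((m n).factorial : ℝ) ≤ Real.Gamma (α * n + α) := gamma_ge_floor_fact hα1 hn
      have hf0 : (0:ℝ) < (m n).factorial := by positivity
      have hΓ0 : (0:ℝ) < Real.Gamma (α * n + α) := lt_of_lt_of_le hf0 hΓ
      calc t ^ n / Real.Gamma (α * n + α) ≤ t ^ n / (m n).factorial :=
            div_le_div_of_nonneg_left (pow_nonneg ht n) hf0 hΓ
        _ ≤ w ^ (m n + 1) / (m n).factorial := by gcongr
        _ = w * (w ^ (m n) / (m n).factorial) := by rw [pow_succ]; ring
        _ ≤ C * (w ^ (m n) / (m n).factorial) := by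
            exact mul_le_mul_of_nonneg_right
              (le_add_of_nonneg_left (by positivity)) (by positivity)
  -- sum it up
  have hsumexp : Summable (fun j : ℕ => w ^ j / j.factorial) :=
    Real.summable_pow_div_factorial w
  have hsumcomp : Summable (fun n : ℕ => w ^ (m n) / (m n).factorial) :=
    hsumexp.comp_injective hminj
  have step1 : (∑' n : ℕ, t ^ n / Real.Gamma (α * n + α)) ≤
      ∑' n : ℕ, C * (w ^ (m n) / (m n).factorial) :=
    Summable.tsum_le_tsum hterm (summable_v hα1 ht) (hsumcomp.mul_left C)
  have step2 : (∑' n : ℕ, C * (w ^ (m n) / (m n).factorial)) ≤ C * Real.exp w := by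
    rw [tsum_mul_left]
    apply mul_le_mul_of_nonneg_left _ hC0.le
    rw [← exp_tsum w]
    exact Summable.tsum_le_tsum_of_inj m hminj (fun j _ => by positivity) (fun n => le_rfl)
      hsumcomp hsumexp
  have hwle : w ≤ 1 + t ^ (1/α) := by
    rcases le_total t 1 with h | h
    · have : u = 1 := max_eq_right h
      rw [hwdef, this, Real.one_rpow]
      have : 0 ≤ t ^ (1/α) := Real.rpow_nonneg ht _
      linarith
    · have : u = t := max_eq_left h
      rw [hwdef, this]
      linarith
  have hCle : C ≤ (1 / Real.Gamma α + 1) * Real.exp (t ^ (1/α)) := by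
    have h1 : C ≤ 1 / Real.Gamma α + (1 + t ^ (1/α)) := by rw [hC]; linarith
    have h2 : (1:ℝ) + t ^ (1/α) ≤ Real.exp (t ^ (1/α)) := by
      have := Real.add_one_le_exp (t ^ (1/α))
      linarith
    have h3 : 1 / Real.Gamma α + (1 + t ^ (1/α)) ≤
        (1 / Real.Gamma α + 1) * Real.exp (t ^ (1/α)) := by
      have hg : (0:ℝ) < 1 / Real.Gamma α := by positivity
      have he1 : (1:ℝ) ≤ Real.exp (t ^ (1/α)) := by
        rw [Real.one_le_exp_iff]
        positivity
      nlinarith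
    linarith
  have hexpw : Real.exp w ≤ Real.exp (1 + t ^ (1/α)) := Real.exp_le_exp.mpr hwle
  calc (∑' n : ℕ, t ^ n / Real.Gamma (α * n + α)) ≤ C * Real.exp w :=
        le_trans step1 step2
    _ ≤ ((1 / Real.Gamma α + 1) * Real.exp (t ^ (1/α))) * Real.exp (1 + t ^ (1/α)) := by
        apply mul_le_mul hCle hexpw (Real.exp_pos _).le
        positivity
    _ = (1 / Real.Gamma α + 1) * Real.exp (1 + 2 * t ^ (1/α)) := by
        rw [mul_assoc, ← Real.exp_add]
        ring_nf


end Stmt5Aux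

open Stmt5Aux Set in
theorem stmt_5 (α M : ℝ) (hα : 1 < α ∧ α < 2) (hM : 0 < M) :
    Summable (fun p : ℕ × ℕ =>
      Real.Gamma (((p.1 : ℝ) + 1)/α + ((p.2 : ℝ) + 1)) *
        M ^ (((p.1 : ℝ) + 1)/α + ((p.2 : ℝ) + 1)) /
        (Real.Gamma (α * ((p.2 : ℝ) + 1)) * Nat.factorial (p.1 + 1))) ∧
    (∑' p : ℕ × ℕ,
      Real.Gamma (((p.1 : ℝ) + 1)/α + ((p.2 : ℝ) + 1)) *
        M ^ (((p.1 : ℝ) + 1)/α + ((p.2 : ℝ) + 1)) /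
        (Real.Gamma (α * ((p.2 : ℝ) + 1)) * Nat.factorial (p.1 + 1)))
      ≤ ∫ s in Set.Ioi (0:ℝ),
          (∑' n : ℕ, s ^ n / Real.Gamma (α * n + α)) *
            Real.exp (s ^ (1/α) - s/M) := by
  obtain ⟨hα1, hα2⟩ := hα
  have hα0 : (0:ℝ) < α := by linarith
  have hΓpos : ∀ n : ℕ, 0 < Real.Gamma (α * n + α) := fun n =>
    Real.Gamma_pos_of_pos (by positivity)
  -- the exponent
  set z : ℕ × ℕ → ℝ := fun p => (p.1 : ℝ)/α + (p.2 : ℝ) + 1 with hzdef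
  have hz : ∀ p : ℕ × ℕ, 0 < z p := fun p => by
    have h1 : (0:ℝ) ≤ (p.1 : ℝ)/α := by positivity
    have h2 : (0:ℝ) ≤ (p.2 : ℝ) := Nat.cast_nonneg _
    simp only [hzdef]; linarith
  set c : ℕ × ℕ → ℝ := fun p => Real.Gamma (α * p.2 + α) * (p.1.factorial : ℝ) with hcdef
  have hc : ∀ p, 0 < c p := fun p =>
    mul_pos (hΓpos p.2) (by exact_mod_cast Nat.factorial_pos _)
  set a : ℕ × ℕ → ℝ := fun p => Real.Gamma (z p) * M ^ (z p) / c p with hadef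
  have ha0 : ∀ p, 0 ≤ a p := fun p => by
    have h1 := Real.Gamma_pos_of_pos (hz p)
    have h2 := Real.rpow_pos_of_pos hM (z p)
    have := hc p
    positivity
  set f : ℕ × ℕ → ℝ → ℝ := fun p t => t ^ (z p - 1) * Real.exp (-(M⁻¹ * t)) / c p with hfdef
  have hfint : ∀ p, IntegrableOn (f p) (Ioi 0) := fun p =>
    ((term_integral hM (hz p)).1.div_const (c p))
  have hfval : ∀ p, ∫ t in Ioi 0, f p t = a p := fun p => by
    simp only [hfdef, hadef]
    rw [integral_div, (term_integral hM (hz p)).2]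
  have hfnn : ∀ p, ∀ t ∈ Ioi (0:ℝ), 0 ≤ f p t := by
    intro p t ht
    have ht0 : (0:ℝ) < t := ht
    have := hc p
    have : (0:ℝ) ≤ t ^ (z p - 1) := Real.rpow_nonneg ht0.le _
    simp only [hfdef]
    positivity
  have hfmeas : ∀ p, Measurable (f p) := by
    intro p
    apply Measurable.div_const
    apply Measurable.mul
    · have hnn : 0 ≤ z p - 1 := by
        have h1 : (0:ℝ) ≤ (p.1 : ℝ)/α := by positivity
        have h2 : (0:ℝ) ≤ (p.2 : ℝ) := Nat.cast_nonneg _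
        simp only [hzdef]; linarith
      exact (Real.continuous_rpow_const hnn).measurable
    · exact (Real.measurable_exp.comp (measurable_const.mul measurable_id).neg)
  -- pointwise identity
  have hEnn : ∀ t : ℝ, 0 ≤ t → 0 ≤ (∑' n : ℕ, t ^ n / Real.Gamma (α * n + α)) := by
    intro t ht
    exact tsum_nonneg (fun n => div_nonneg (pow_nonneg ht n) (hΓpos n).le)
  have hpt : ∀ t ∈ Ioi (0:ℝ), (∑' p : ℕ × ℕ, ENNReal.ofReal (f p t)) =
      ENNReal.ofReal ((∑' n : ℕ, t ^ n / Real.Gamma (α * n + α)) *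
        Real.exp (t ^ (1/α) - t/M)) := by
    intro t ht
    have ht0 : (0:ℝ) < t := ht
    have hsplit : ∀ k n : ℕ, f (k, n) t =
        ((t ^ (1/α)) ^ k / k.factorial) *
          ((t ^ n / Real.Gamma (α * n + α)) * Real.exp (-(M⁻¹ * t))) := by
      intro k n
      have hz1 : z (k, n) - 1 = (1/α) * (k:ℝ) + (n:ℝ) := by
        simp only [hzdef]; push_cast; ring
      simp only [hfdef, hcdef, hz1]
      rw [Real.rpow_add ht0, Real.rpow_mul ht0.le, Real.rpow_natCast, Real.rpow_natCast]
      ring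
    have hofr : ∀ k n : ℕ, ENNReal.ofReal (f (k, n) t) =
        ENNReal.ofReal ((t ^ (1/α)) ^ k / k.factorial) *
          (ENNReal.ofReal (t ^ n / Real.Gamma (α * n + α)) *
            ENNReal.ofReal (Real.exp (-(M⁻¹ * t)))) := by
      intro k n
      rw [hsplit k n, ENNReal.ofReal_mul (by positivity),
        ENNReal.ofReal_mul (div_nonneg (pow_nonneg ht0.le n) (hΓpos n).le)]
    have hX : (∑' k : ℕ, ENNReal.ofReal ((t ^ (1/α)) ^ k / k.factorial)) =
        ENNReal.ofReal (Real.exp (t ^ (1/α))) := by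
      rw [← exp_tsum (t ^ (1/α))]
      exact (ENNReal.ofReal_tsum_of_nonneg (fun k => by positivity)
        (Real.summable_pow_div_factorial _)).symm
    have hY : (∑' n : ℕ, ENNReal.ofReal (t ^ n / Real.Gamma (α * n + α))) =
        ENNReal.ofReal (∑' n : ℕ, t ^ n / Real.Gamma (α * n + α)) :=
      (ENNReal.ofReal_tsum_of_nonneg
        (fun n => div_nonneg (pow_nonneg ht0.le n) (hΓpos n).le)
        (summable_v hα1 ht0.le)).symm
    rw [ENNReal.tsum_prod']
    simp_rw [hofr, ENNReal.tsum_mul_left, ENNReal.tsum_mul_right]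
    rw [hX, hY, ← ENNReal.ofReal_mul (hEnn t ht0.le), ← ENNReal.ofReal_mul (Real.exp_pos _).le]
    congr 1
    rw [show t ^ (1/α) - t/M = t ^ (1/α) + -(M⁻¹ * t) by ring, Real.exp_add]
    ring
  -- define g
  set g : ℝ → ℝ := fun s => (∑' n : ℕ, s ^ n / Real.Gamma (α * n + α)) *
      Real.exp (s ^ (1/α) - s/M) with hgdef
  have hgnn : ∀ t ∈ Ioi (0:ℝ), 0 ≤ g t := fun t ht =>
    mul_nonneg (hEnn t (le_of_lt ht)) (Real.exp_pos _).le
  -- measurability of g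
  have hgaesm : AEStronglyMeasurable g (volume.restrict (Ioi 0)) := by
    set G : ℝ → ℝ := fun t =>
      (∑' n : ℕ, ENNReal.ofReal (t ^ n / Real.Gamma (α * n + α))).toReal *
        Real.exp (t ^ (1/α) - t/M) with hGdef
    have hGmeas : Measurable G := by
      apply Measurable.mul
      · exact (Measurable.ennreal_tsum (fun n =>
          ENNReal.measurable_ofReal.comp
            ((measurable_id.pow_const n).div_const _))).ennreal_toReal
      · exact Real.measurable_exp.comp
          (((Real.continuous_rpow_const (by positivity)).measurable).sub
            (measurable_id.div_const M))
    apply hGmeas.aestronglyMeasurable.congr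
    rw [Filter.EventuallyEq, ae_restrict_iff' measurableSet_Ioi]
    apply Filter.Eventually.of_forall
    intro t ht
    have ht0 : (0:ℝ) < t := ht
    have : (∑' n : ℕ, ENNReal.ofReal (t ^ n / Real.Gamma (α * n + α))).toReal =
        ∑' n : ℕ, t ^ n / Real.Gamma (α * n + α) := by
      rw [← ENNReal.ofReal_tsum_of_nonneg
        (fun n => div_nonneg (pow_nonneg ht0.le n) (hΓpos n).le) (summable_v hα1 ht0.le),
        ENNReal.toReal_ofReal (hEnn t ht0.le)]
    simp only [hGdef, hgdef, this]
  -- majorant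
  obtain ⟨K, hK0, hK⟩ := sublinear hα1 (ε := (6 * M)⁻¹) (by positivity)
  set C2 : ℝ := (1 / Real.Gamma α + 1) * Real.exp (1 + 3 * K) with hC2def
  have hΓα : 0 < Real.Gamma α := Real.Gamma_pos_of_pos hα0
  have hC20 : 0 ≤ C2 := by positivity
  have hmaj : ∀ t ∈ Ioi (0:ℝ), ‖g t‖ ≤ C2 * Real.exp (-(2 * M)⁻¹ * t) := by
    intro t ht
    have ht0 : (0:ℝ) < t := ht
    rw [Real.norm_of_nonneg (hgnn t ht)]
    have h1 : g t ≤ ((1 / Real.Gamma α + 1) * Real.exp (1 + 2 * t ^ (1/α))) *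
        Real.exp (t ^ (1/α) - t/M) := by
      apply mul_le_mul_of_nonneg_right (E_le hα1 ht0.le) (Real.exp_pos _).le
    have h2 : (1 + 2 * t ^ (1/α)) + (t ^ (1/α) - t/M) ≤ (1 + 3 * K) + (-(2 * M)⁻¹ * t) := by
      have h3 := hK t ht0.le
      have : 3 * ((6 * M)⁻¹ * t) - t/M = -((2 * M)⁻¹ * t) := by
        field_simp
        ring
      nlinarith
    calc g t ≤ ((1 / Real.Gamma α + 1) * Real.exp (1 + 2 * t ^ (1/α))) *
        Real.exp (t ^ (1/α) - t/M) := h1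
      _ = (1 / Real.Gamma α + 1) * Real.exp ((1 + 2 * t ^ (1/α)) + (t ^ (1/α) - t/M)) := by
          rw [Real.exp_add (1 + 2 * t ^ (1/α)) (t ^ (1/α) - t/M)]; ring
      _ ≤ (1 / Real.Gamma α + 1) * Real.exp ((1 + 3 * K) + (-(2 * M)⁻¹ * t)) := by
          apply mul_le_mul_of_nonneg_left (Real.exp_le_exp.mpr h2) (by positivity)
      _ = C2 * Real.exp (-(2 * M)⁻¹ * t) := by rw [Real.exp_add, hC2def]; ring
  have hgint : IntegrableOn g (Ioi 0) := by
    apply Integrable.mono'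
      ((exp_neg_integrableOn_Ioi 0 (by positivity : (0:ℝ) < (2 * M)⁻¹)).const_mul C2)
      hgaesm
    rw [ae_restrict_iff' measurableSet_Ioi]
    exact Filter.Eventually.of_forall hmaj
  -- Tonelli chain
  have hFlint : ∀ p : ℕ × ℕ, ∫⁻ t in Ioi 0, ENNReal.ofReal (f p t) = ENNReal.ofReal (a p) := by
    intro p
    rw [← ofReal_integral_eq_lintegral_ofReal (hfint p)
      ((ae_restrict_iff' measurableSet_Ioi).mpr (Filter.Eventually.of_forall (hfnn p))),
      hfval p]
  have hgnn_ae : 0 ≤ᵐ[volume.restrict (Ioi 0)] g :=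
    (ae_restrict_iff' measurableSet_Ioi).mpr (Filter.Eventually.of_forall hgnn)
  have hlint : (∫⁻ t in Ioi 0, ENNReal.ofReal (g t)) = ∑' p : ℕ × ℕ, ENNReal.ofReal (a p) := by
    calc (∫⁻ t in Ioi 0, ENNReal.ofReal (g t))
        = ∫⁻ t in Ioi 0, ∑' p : ℕ × ℕ, ENNReal.ofReal (f p t) := by
          apply lintegral_congr_ae
          rw [Filter.EventuallyEq, ae_restrict_iff' measurableSet_Ioi]
          exact Filter.Eventually.of_forall (fun t ht => (hpt t ht).symm)
      _ = ∑' p : ℕ × ℕ, ∫⁻ t in Ioi 0, ENNReal.ofReal (f p t) :=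
          lintegral_tsum (fun p => (ENNReal.measurable_ofReal.comp (hfmeas p)).aemeasurable)
      _ = ∑' p : ℕ × ℕ, ENNReal.ofReal (a p) := tsum_congr hFlint
  have hofReal : ENNReal.ofReal (∫ t in Ioi 0, g t) = ∑' p : ℕ × ℕ, ENNReal.ofReal (a p) := by
    rw [ofReal_integral_eq_lintegral_ofReal hgint hgnn_ae, hlint]
  have hfin : (∑' p : ℕ × ℕ, ENNReal.ofReal (a p)) ≠ ⊤ := by
    rw [← hofReal]; exact ENNReal.ofReal_ne_top
  have hSa : Summable a := by
    have := ENNReal.summable_toReal hfin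
    simpa only [ENNReal.toReal_ofReal (ha0 _)] using this
  have htsa : ∑' p : ℕ × ℕ, a p = ∫ t in Ioi 0, g t := by
    have h1 : (∑' p : ℕ × ℕ, ENNReal.ofReal (a p)).toReal = ∑' p : ℕ × ℕ, a p := by
      rw [ENNReal.tsum_toReal_eq (fun p => ENNReal.ofReal_ne_top)]
      exact tsum_congr (fun p => ENNReal.toReal_ofReal (ha0 p))
    rw [← h1, ← hofReal, ENNReal.toReal_ofReal
      (setIntegral_nonneg measurableSet_Ioi hgnn)]
  -- relate target terms to a
  have hterm : ∀ p : ℕ × ℕ,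
      Real.Gamma (((p.1 : ℝ) + 1)/α + ((p.2 : ℝ) + 1)) *
        M ^ (((p.1 : ℝ) + 1)/α + ((p.2 : ℝ) + 1)) /
        (Real.Gamma (α * ((p.2 : ℝ) + 1)) * Nat.factorial (p.1 + 1)) =
      a (p.1 + 1, p.2) := by
    intro p
    simp only [hadef, hzdef, hcdef]
    push_cast
    ring_nf
  set φ : ℕ × ℕ → ℕ × ℕ := fun p => (p.1 + 1, p.2) with hφdef
  have hφinj : Function.Injective φ := by
    intro p q h
    simp only [hφdef, Prod.mk.injEq] at h
    exact Prod.ext (by omega) h.2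
  constructor
  · have : Summable (a ∘ φ) := hSa.comp_injective hφinj
    apply Summable.congr this
    intro p
    exact (hterm p).symm
  · calc (∑' p : ℕ × ℕ,
        Real.Gamma (((p.1 : ℝ) + 1)/α + ((p.2 : ℝ) + 1)) *
          M ^ (((p.1 : ℝ) + 1)/α + ((p.2 : ℝ) + 1)) /
          (Real.Gamma (α * ((p.2 : ℝ) + 1)) * Nat.factorial (p.1 + 1)))
        = ∑' p : ℕ × ℕ, a (φ p) := tsum_congr hterm
      _ ≤ ∑' p : ℕ × ℕ, a p :=
          Summable.tsum_le_tsum_of_inj φ hφinj (fun c _ => ha0 c) (fun p => le_rfl)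
            (hSa.comp_injective hφinj) hSa
      _ = ∫ t in Ioi 0, g t := htsa
end

section
/- For α = 2, the double series ∑_{k≥1,n≥1} [Γ(k/2 + n)/(Γ(2n)·k!)]·(−1)^{k+n}·sin(πk/2)·[k·c + (2n−1)(c−x)]·(c−x)^{k−1}·c^{2n−2} equals π·(2c−x)/(2√π)·exp(−(2c−x)²/4) for all reals c > max(x,0). -/
/-! The sine kills the terms with even `k`. For `k = 2j + 1`, `n = l + 1` and `m = j + l`, the
value `Γ(m + 3/2) = √π (2m+1)! / (2 · 4^m m!)` turns the summand into `√π/2 · (-1/4)^m / m!` times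
the terms of index `2j` and `2j + 1` in the binomial expansion of
`(2c - x)^(2m+1) = ((c - x) + c)^(2m+1)`. The series converges absolutely (it is dominated by the
same series at `|c - x|`, `|c|`), so it may be summed along the antidiagonals `j + l = m`, which
leaves `√π/2 · (2c - x) · ∑ (-(2c - x)²/4)^m / m! = √π/2 · (2c - x) · exp(-(2c - x)²/4)`. -/

open Real Finset Nat

section Antidiagonal

variable {A : Type*} [AddCommMonoid A] [HasAntidiagonal A]

theorem summable_of_nonneg_of_summable_sum_antidiagonal {f : A × A → ℝ} (hf : ∀ p, 0 ≤ f p)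
    (h : Summable fun n ↦ ∑ p ∈ antidiagonal n, f p) : Summable f := by
  rw [← HasAntidiagonal.sigmaAntidiagonalEquivProd.summable_iff]
  exact (summable_sigma_of_nonneg fun _ ↦ hf _).mpr
    ⟨fun _ ↦ .of_finite, h.congr fun n ↦ (Finset.tsum_subtype (antidiagonal n) f).symm⟩

theorem Summable.tsum_eq_tsum_sum_antidiagonal {α : Type*} [AddCommMonoid α] [TopologicalSpace α]
    [ContinuousAdd α] [T3Space α] {f : A × A → α} (hf : Summable f) :
    ∑' p, f p = ∑' n, ∑ p ∈ antidiagonal n, f p := by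
  rw [← HasAntidiagonal.sigmaAntidiagonalEquivProd.tsum_eq]
  exact ((HasAntidiagonal.sigmaAntidiagonalEquivProd.summable_iff).mpr hf).tsum_sigma'
      (fun n ↦ (hasSum_fintype _).summable) |>.trans
    (tsum_congr fun n ↦ Finset.tsum_subtype (antidiagonal n) f)

end Antidiagonal

theorem Finset.sum_range_two_mul {M : Type*} [AddCommMonoid M] (f : ℕ → M) (n : ℕ) :
    ∑ i ∈ range (2 * n), f i = ∑ i ∈ range n, (f (2 * i) + f (2 * i + 1)) := by
  induction n with
  | zero => simp
  | succ n ih => rw [Nat.mul_succ, sum_range_succ, sum_range_succ, ih, sum_range_succ, add_assoc]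

def oddBinomialPair {R : Type*} [CommSemiring R] (a b : R) (p : ℕ × ℕ) : R :=
  (2 * (p.1 + p.2) + 1).choose (2 * p.1) * a ^ (2 * p.1) * b ^ (2 * p.2 + 1) +
    (2 * (p.1 + p.2) + 1).choose (2 * p.1 + 1) * a ^ (2 * p.1 + 1) * b ^ (2 * p.2)

theorem sum_antidiagonal_oddBinomialPair {R : Type*} [CommSemiring R] (a b : R) (m : ℕ) :
    ∑ p ∈ antidiagonal m, oddBinomialPair a b p = (a + b) ^ (2 * m + 1) := by
  rw [add_pow, show 2 * m + 1 + 1 = 2 * (m + 1) by ring, sum_range_two_mul,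
    Nat.sum_antidiagonal_eq_sum_range_succ_mk]
  refine sum_congr rfl fun j hj ↦ ?_
  have hjm : j ≤ m := Nat.lt_succ_iff.mp (mem_range.mp hj)
  rw [oddBinomialPair, Nat.add_sub_cancel' hjm, show 2 * m + 1 - 2 * j = 2 * (m - j) + 1 by omega,
    show 2 * m + 1 - (2 * j + 1) = 2 * (m - j) by omega]
  ring

theorem abs_oddBinomialPair_le {R : Type*} [CommRing R] [LinearOrder R] [IsStrictOrderedRing R]
    (a b : R) (p : ℕ × ℕ) : |oddBinomialPair a b p| ≤ oddBinomialPair |a| |b| p := by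
  refine (abs_add_le _ _).trans_eq ?_
  simp only [oddBinomialPair, abs_mul, abs_pow, Nat.abs_cast]

theorem sum_antidiagonal_pow_div_factorial_mul_oddBinomialPair (t a b : ℝ) (m : ℕ) :
    ∑ p ∈ antidiagonal m, t ^ (p.1 + p.2) / (p.1 + p.2)! * oddBinomialPair a b p =
      (a + b) * ((t * (a + b) ^ 2) ^ m / m !) := by
  rw [sum_congr rfl fun p hp ↦ by rw [mem_antidiagonal.mp hp], ← mul_sum,
    sum_antidiagonal_oddBinomialPair, mul_pow, ← pow_mul]
  ring

theorem hasSum_pow_div_factorial_mul_oddBinomialPair (t a b : ℝ) :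
    HasSum (fun p : ℕ × ℕ ↦ t ^ (p.1 + p.2) / (p.1 + p.2)! * oddBinomialPair a b p)
      ((a + b) * exp (t * (a + b) ^ 2)) := by
  have hexp (t a b : ℝ) : HasSum (fun m : ℕ ↦ (a + b) * ((t * (a + b) ^ 2) ^ m / m !))
      ((a + b) * exp (t * (a + b) ^ 2)) := by
    rw [exp_eq_exp_ℝ]
    exact (NormedSpace.expSeries_div_hasSum_exp (t * (a + b) ^ 2)).mul_left (a + b)
  have hbound : Summable fun p : ℕ × ℕ ↦
      |t| ^ (p.1 + p.2) / (p.1 + p.2)! * oddBinomialPair |a| |b| p := by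
    apply summable_of_nonneg_of_summable_sum_antidiagonal
    · intro p
      unfold oddBinomialPair
      positivity
    · simp_rw [sum_antidiagonal_pow_div_factorial_mul_oddBinomialPair]
      exact (hexp _ _ _).summable
  have hsum : Summable fun p : ℕ × ℕ ↦ t ^ (p.1 + p.2) / (p.1 + p.2)! * oddBinomialPair a b p := by
    refine hbound.of_norm_bounded fun p ↦ ?_
    rw [Real.norm_eq_abs, abs_mul, abs_div, abs_pow, Nat.abs_cast]
    gcongr
    exact abs_oddBinomialPair_le a b p
  convert hsum.hasSum using 1
  rw [hsum.tsum_eq_tsum_sum_antidiagonal]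
  simp_rw [sum_antidiagonal_pow_div_factorial_mul_oddBinomialPair]
  exact (hexp t a b).tsum_eq.symm

theorem Real.Gamma_nat_add_three_halves (m : ℕ) :
    Gamma (m + 3 / 2) = √π * (2 * m + 1)! / (2 * 4 ^ m * m !) := by
  have hfact : ((2 * m + 1)! : ℝ) = (2 * m + 1)‼ * (2 ^ m * m !) := by
    rw [factorial_eq_mul_doubleFactorial, doubleFactorial_two_mul]; push_cast; ring
  rw [show (m : ℝ) + 3 / 2 = m + 1 + 1 / 2 by ring, Gamma_nat_add_one_add_half, hfact,
    show (4 : ℝ) ^ m = 2 ^ m * 2 ^ m by rw [← mul_pow]; norm_num]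
  field_simp
  ring

theorem Real.sin_pi_mul_two_mul_add_one_div_two (j : ℕ) :
    sin (π * (2 * j + 1) / 2) = (-1) ^ j := by
  rw [show π * (2 * j + 1) / 2 = j * π + π / 2 by ring, sin_add_pi_div_two, cos_nat_mul_pi]

-- The summand of the series, indexed by `p = (k - 1, n - 1)`.
noncomputable def doubleSeriesTerm (x c : ℝ) (p : ℕ × ℕ) : ℝ :=
  Gamma ((p.1 + 1 : ℝ) / 2 + (p.2 + 1)) / (Gamma (2 * (p.2 + 1 : ℝ)) * (p.1 + 1)!) *
    (-1 : ℝ) ^ (p.1 + 1 + (p.2 + 1)) * sin (π * (p.1 + 1) / 2) *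
    ((p.1 + 1) * c + (2 * (p.2 + 1 : ℝ) - 1) * (c - x)) * (c - x) ^ p.1 * c ^ (2 * p.2)

theorem doubleSeriesTerm_odd (x c : ℝ) (j l : ℕ) : doubleSeriesTerm x c (2 * j + 1, l) = 0 := by
  have hsin : sin (π * ((2 * j + 1 : ℕ) + 1) / 2) = 0 := by
    rw [show π * ((2 * j + 1 : ℕ) + 1 : ℝ) / 2 = (j + 1 : ℕ) * π by push_cast; ring,
      sin_nat_mul_pi]
  simp only [doubleSeriesTerm, hsin, mul_zero, zero_mul]

theorem doubleSeriesTerm_even (x c : ℝ) (j l : ℕ) :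
    doubleSeriesTerm x c (2 * j, l) =
      √π / 2 * ((-1 / 4) ^ (j + l) / (j + l)! * oddBinomialPair (c - x) c (j, l)) := by
  have hsin : sin (π * ((2 * j : ℕ) + 1) / 2) = (-1) ^ j := by
    exact_mod_cast sin_pi_mul_two_mul_add_one_div_two j
  have hsign : (-1 : ℝ) ^ (2 * j + 1 + (l + 1)) = (-1) ^ l := by
    rw [show 2 * j + 1 + (l + 1) = 2 * (j + 1) + l by ring, pow_add, pow_mul, neg_one_sq,
      one_pow, one_mul]
  have hnum : Gamma (((2 * j : ℕ) + 1) / 2 + (l + 1)) =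
      √π * (2 * (j + l) + 1)! / (2 * 4 ^ (j + l) * (j + l)!) := by
    rw [← Gamma_nat_add_three_halves]; push_cast; ring_nf
  have hden : Gamma (2 * (l + 1)) = (2 * l + 1)! := by
    rw [← Gamma_nat_eq_factorial]; push_cast; ring_nf
  have hchoose_even := Nat.cast_choose ℝ (show 2 * j ≤ 2 * (j + l) + 1 by omega)
  have hchoose_odd := Nat.cast_choose ℝ (show 2 * j + 1 ≤ 2 * (j + l) + 1 by omega)
  rw [show 2 * (j + l) + 1 - 2 * j = 2 * l + 1 by omega] at hchoose_even
  rw [show 2 * (j + l) + 1 - (2 * j + 1) = 2 * l by omega] at hchoose_odd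
  simp only [doubleSeriesTerm, oddBinomialPair]
  rw [hsin, hsign, hnum, hden, hchoose_even, hchoose_odd, div_pow]
  simp only [Nat.factorial_succ]
  push_cast
  field_simp
  ring

theorem stmt_7_general (x c : ℝ) :
    (∑' p : ℕ × ℕ,
      Real.Gamma (((p.1 : ℝ) + 1)/2 + ((p.2 : ℝ) + 1)) /
          (Real.Gamma (2 * ((p.2 : ℝ) + 1)) * Nat.factorial (p.1 + 1)) *
        (-1 : ℝ) ^ ((p.1 + 1) + (p.2 + 1)) *
        Real.sin (Real.pi * ((p.1 : ℝ) + 1) / 2) *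
        (((p.1 : ℝ) + 1) * c + (2 * ((p.2 : ℝ) + 1) - 1) * (c - x)) *
        (c - x) ^ p.1 * c ^ (2 * p.2))
    = Real.pi * ((2*c - x) / (2 * Real.sqrt Real.pi) *
        Real.exp (-(2*c - x)^2 / 4)) := by
  have hsupp : Function.support (doubleSeriesTerm x c) ⊆
      Set.range fun q : ℕ × ℕ ↦ (2 * q.1, q.2) := by
    rintro ⟨k, l⟩ hkl
    obtain ⟨j, rfl | rfl⟩ := Nat.even_or_odd' k
    · exact ⟨(j, l), rfl⟩
    · exact absurd (doubleSeriesTerm_odd x c j l) hkl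
  have hinj : Function.Injective fun q : ℕ × ℕ ↦ (2 * q.1, q.2) := by
    rintro ⟨j, l⟩ ⟨j', l'⟩ h
    simp only [Prod.mk.injEq] at h
    ext <;> omega
  change ∑' p, doubleSeriesTerm x c p = _
  rw [← hinj.tsum_eq hsupp]
  simp only [doubleSeriesTerm_even]
  rw [tsum_mul_left, (hasSum_pow_div_factorial_mul_oddBinomialPair _ _ _).tsum_eq,
    show c - x + c = 2 * c - x by ring]
  have hπ : √π ^ 2 = π := sq_sqrt pi_pos.le
  field_simp
  rw [hπ]
  ring

theorem stmt_7 (x c : ℝ) (hc : max x 0 < c) :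
    (∑' p : ℕ × ℕ,
      Real.Gamma (((p.1 : ℝ) + 1)/2 + ((p.2 : ℝ) + 1)) /
          (Real.Gamma (2 * ((p.2 : ℝ) + 1)) * Nat.factorial (p.1 + 1)) *
        (-1 : ℝ) ^ ((p.1 + 1) + (p.2 + 1)) *
        Real.sin (Real.pi * ((p.1 : ℝ) + 1) / 2) *
        (((p.1 : ℝ) + 1) * c + (2 * ((p.2 : ℝ) + 1) - 1) * (c - x)) *
        (c - x) ^ p.1 * c ^ (2 * p.2))
    = Real.pi * ((2*c - x) / (2 * Real.sqrt Real.pi) *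
        Real.exp (-(2*c - x)^2 / 4)) :=
  stmt_7_general x c
end

section
/- Let α ∈ (1,2) and define the double power series h(x,t) = (1/π)·∑_{k≥1,n≥1} (−1)^{k+n}·[Γ(k/α + n)/(Γ(αn)·k!)]·sin(πk/α)·(1−x)^k·t^{−k/α−n}. Then for every real x and complex t with t ∉ (−∞, 0], the series converges absolutely; moreover for fixed t the function x ↦ h(x,t) is entire and for fixed x the function t ↦ h(x,t) is analytic on ℂ ∖ (−∞, 0]. -/
/-!
On `‖1 - x‖ ≤ R`, `‖t‖ ≥ r`, the summand of index `(k, n)` is dominated by a product `a k * b n`.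
The Gamma factor is split by Hölder's inequality for `Γ` (log-convexity) with `α` and its
conjugate exponent `β = α / (α - 1)`: `Γ(k/α + n) ≤ Γ(k)^(1/α) Γ(βn)^(1/β)`. Both factors are
then summable by the ratio test: by the slope bounds
`log (x - 1) ≤ (log Γ(x + s) - log Γ x) / s ≤ log (x + s)` of the convex function `log ∘ Γ`, the
ratios decay like `k^(1/α - 1)` and `n^(1 - α)`. This locally uniform domination gives
summability, and holomorphy of the sum in `x` and in `t` by Weierstrass' theorem.
-/

open Real Set Filter Topology
open scoped Nat

namespace Real

lemma Gamma_add_le_mul_rpow {x s : ℝ} (hx : 0 < x) (hs : 0 ≤ s) :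
    Gamma (x + s) ≤ Gamma x * (x + s) ^ s := by
  rcases hs.eq_or_lt with rfl | hs
  · simp
  have hxs : 0 < x + s := by linarith
  have hslope := convexOn_log_Gamma.slope_mono_adjacent (mem_Ioi.2 hx)
    (mem_Ioi.2 (by linarith : 0 < x + s + 1)) (y := x + s) (by linarith) (by linarith)
  simp only [Function.comp, Gamma_add_one hxs.ne', log_mul hxs.ne' (Gamma_pos_of_pos hxs).ne',
    add_sub_cancel_left, add_sub_cancel_right, div_one] at hslope
  rw [div_le_iff₀ hs] at hslope
  have hGx := Gamma_pos_of_pos hx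
  rw [← exp_log (Gamma_pos_of_pos hxs), ← exp_log (mul_pos hGx (rpow_pos_of_pos hxs s)),
    log_mul hGx.ne' (rpow_pos_of_pos hxs s).ne', log_rpow hxs, exp_le_exp]
  linarith

lemma Gamma_mul_rpow_le_Gamma_add {x s : ℝ} (hx : 1 < x) (hs : 0 ≤ s) :
    Gamma x * (x - 1) ^ s ≤ Gamma (x + s) := by
  rcases hs.eq_or_lt with rfl | hs
  · simp
  have hx1 : 0 < x - 1 := by linarith
  have hslope := convexOn_log_Gamma.slope_mono_adjacent (mem_Ioi.2 hx1)
    (mem_Ioi.2 (by linarith : 0 < x + s)) (y := x) (by linarith) (by linarith)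
  have hG : Gamma x = (x - 1) * Gamma (x - 1) := by
    simpa using Gamma_add_one hx1.ne'
  simp only [Function.comp, hG, log_mul hx1.ne' (Gamma_pos_of_pos hx1).ne',
    sub_sub_cancel, add_sub_cancel_left, div_one] at hslope
  rw [le_div_iff₀ hs] at hslope
  have hGx := Gamma_pos_of_pos (by linarith : 0 < x)
  rw [← exp_log (Gamma_pos_of_pos (by linarith : 0 < x + s)),
    ← exp_log (mul_pos hGx (rpow_pos_of_pos hx1 s)),
    log_mul hGx.ne' (rpow_pos_of_pos hx1 s).ne', log_rpow hx1, exp_le_exp, hG,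
    log_mul hx1.ne' (Gamma_pos_of_pos hx1).ne']
  linarith

lemma Gamma_div_add_div_le {α β s t : ℝ} (hαβ : α.HolderConjugate β) (hs : 0 < s)
    (ht : 0 < t) : Gamma (s / α + t / β) ≤ Gamma s ^ α⁻¹ * Gamma t ^ β⁻¹ := by
  simpa only [div_eq_inv_mul] using Gamma_mul_add_mul_le_rpow_Gamma_mul_rpow_Gamma hs ht
    (inv_pos.2 hαβ.pos) (inv_pos.2 hαβ.symm.pos) hαβ.inv_add_inv_eq_one

end Real

lemma summable_of_le_mul_rpow_neg {f : ℕ → ℝ} (hf : ∀ n, 0 ≤ f n) {C ε : ℝ}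
    (hε : 0 < ε) (h : ∀ n : ℕ, f (n + 1) ≤ C * ((n : ℝ) + 1) ^ (-ε) * f n) : Summable f := by
  have hlim : Tendsto (fun n : ℕ => C * ((n : ℝ) + 1) ^ (-ε)) atTop (𝓝 0) := by
    simpa using ((tendsto_rpow_neg_atTop hε).comp
      (tendsto_atTop_add_const_right _ 1 tendsto_natCast_atTop_atTop)).const_mul C
  refine summable_of_ratio_norm_eventually_le (r := 1 / 2) (by norm_num) ?_
  filter_upwards [hlim.eventually_le_const (by norm_num : (0 : ℝ) < 1 / 2)] with n hn
  rw [norm_of_nonneg (hf _), norm_of_nonneg (hf _)]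
  exact (h n).trans (mul_le_mul_of_nonneg_right hn (hf n))

lemma summable_factorial_rpow_div_factorial_succ_mul_pow {θ : ℝ} (hθ : θ < 1) {c : ℝ}
    (hc : 0 ≤ c) :
    Summable fun k : ℕ => (k ! : ℝ) ^ θ / (k + 1)! * c ^ (k + 1) := by
  refine summable_of_le_mul_rpow_neg (C := c) (fun k => by positivity) (sub_pos.2 hθ)
    fun k => ?_
  have hk : (0 : ℝ) < k + 1 := by positivity
  simp only [Nat.factorial_succ (k + 1), Nat.factorial_succ k, Nat.cast_mul, Nat.cast_succ]
  rw [mul_rpow hk.le (by positivity), neg_sub, rpow_sub hk, rpow_one]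
  have hratio : ((k : ℝ) + 1) / ((k : ℝ) + 1 + 1) ≤ 1 := by
    rw [div_le_one (by positivity)]; linarith
  refine le_of_eq_of_le ?_ (mul_le_of_le_one_left (by positivity) hratio)
  field_simp
  ring

lemma summable_Gamma_rpow_inv_div_Gamma_mul_pow {α β : ℝ} (hα : 1 < α) (hβ : 0 < β) {d : ℝ}
    (hd : 0 ≤ d) :
    Summable fun n : ℕ => Gamma (β * (n + 1)) ^ β⁻¹ / Gamma (α * (n + 1)) * d ^ (n + 1) := by
  refine summable_of_le_mul_rpow_neg (C := 2 * β * d / (α - 1) ^ α)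
    (fun n => ?_) (sub_pos.2 hα) fun n => ?_
  · have := Gamma_pos_of_pos (by positivity : 0 < β * (n + 1))
    have := Gamma_pos_of_pos (by positivity : 0 < α * (n + 1))
    positivity
  set m : ℝ := (n : ℝ) + 1 with hm
  have hm0 : 0 < m := by positivity
  have hx : 0 < β * m := by positivity
  have hy : 1 < α * m := by nlinarith [(by simp [hm] : (1 : ℝ) ≤ m)]
  have hGx := Gamma_pos_of_pos hx
  have hnum : Gamma (β * m + β) ^ β⁻¹ ≤ Gamma (β * m) ^ β⁻¹ * (2 * β * m) := by
    calc Gamma (β * m + β) ^ β⁻¹ ≤ (Gamma (β * m) * (β * m + β) ^ β) ^ β⁻¹ :=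
          rpow_le_rpow (Gamma_pos_of_pos (by positivity)).le
            (Gamma_add_le_mul_rpow hx hβ.le) (by positivity)
      _ = Gamma (β * m) ^ β⁻¹ * (β * m + β) := by
          rw [mul_rpow hGx.le (by positivity), rpow_rpow_inv (by positivity) hβ.ne']
      _ ≤ Gamma (β * m) ^ β⁻¹ * (2 * β * m) := by
          gcongr; nlinarith [(by simp [hm] : (1 : ℝ) ≤ m)]
  have hden : Gamma (α * m) * ((α - 1) ^ α * m ^ α) ≤ Gamma (α * m + α) := by
    calc Gamma (α * m) * ((α - 1) ^ α * m ^ α) = Gamma (α * m) * ((α - 1) * m) ^ α := by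
          rw [mul_rpow (by linarith) hm0.le]
      _ ≤ Gamma (α * m) * (α * m - 1) ^ α := by
          gcongr
          nlinarith [(by simp [hm] : (1 : ℝ) ≤ m)]
      _ ≤ Gamma (α * m + α) := Gamma_mul_rpow_le_Gamma_add hy (by linarith)
  have hstep : ((n + 1 : ℕ) : ℝ) + 1 = m + 1 := by push_cast; ring
  rw [hstep, mul_add_one β, mul_add_one α, pow_succ]
  calc Gamma (β * m + β) ^ β⁻¹ / Gamma (α * m + α) * (d ^ (n + 1) * d)
      ≤ Gamma (β * m) ^ β⁻¹ * (2 * β * m) / (Gamma (α * m) * ((α - 1) ^ α * m ^ α)) *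
          (d ^ (n + 1) * d) := by gcongr
    _ = 2 * β * d / (α - 1) ^ α * m ^ (-(α - 1)) *
          (Gamma (β * m) ^ β⁻¹ / Gamma (α * m) * d ^ (n + 1)) := by
      rw [neg_sub, rpow_sub hm0, rpow_one]
      field_simp

lemma differentiableOn_tsum_of_locally_summable_norm {ι : Type*} {F : ι → ℂ → ℂ} {U : Set ℂ}
    (hU : IsOpen U) (hF : ∀ i, DifferentiableOn ℂ (F i) U)
    (hloc : ∀ z ∈ U, ∃ ε > 0, ∃ u : ι → ℝ, Summable u ∧
      ∀ i, ∀ w ∈ Metric.ball z ε, ‖F i w‖ ≤ u i) :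
    DifferentiableOn ℂ (fun w => ∑' i, F i w) U := by
  intro z hz
  obtain ⟨ε, hε, u, hu, hle⟩ := hloc z hz
  have hV : IsOpen (U ∩ Metric.ball z ε) := hU.inter Metric.isOpen_ball
  exact ((Complex.differentiableOn_tsum_of_summable_norm hu
    (fun i => (hF i).mono inter_subset_left) hV fun i w hw => hle i w hw.2).differentiableAt
      (hV.mem_nhds ⟨hz, Metric.mem_ball_self hε⟩)).differentiableWithinAt

/-- `hSeriesTerm α x t (k, n)` is the summand of `π h(x, t)` of index `(k + 1, n + 1)`. -/
noncomputable def hSeriesTerm (α : ℝ) (x t : ℂ) (p : ℕ × ℕ) : ℂ :=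
  (-1 : ℂ) ^ ((p.1 + 1) + (p.2 + 1)) *
    ((Gamma ((p.1 + 1) / α + (p.2 + 1)) / (Gamma (α * (p.2 + 1)) * (p.1 + 1)!) : ℝ) : ℂ) *
    (sin (π * (p.1 + 1) / α) : ℂ) * (1 - x) ^ (p.1 + 1) *
    t ^ ((-((p.1 + 1) / α) - (p.2 + 1) : ℝ) : ℂ)

lemma norm_hSeriesTerm_le {α β : ℝ} (hαβ : α.HolderConjugate β) {R r : ℝ} {x t : ℂ}
    (hx : ‖1 - x‖ ≤ R) (hr : 0 < r) (ht : r ≤ ‖t‖) (k n : ℕ) :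
    ‖hSeriesTerm α x t (k, n)‖ ≤
      (k ! : ℝ) ^ α⁻¹ / (k + 1)! * (R * r ^ (-α⁻¹)) ^ (k + 1) *
        (Gamma (β * (n + 1)) ^ β⁻¹ / Gamma (α * (n + 1)) * r⁻¹ ^ (n + 1)) := by
  have hα := hαβ.pos
  have hΓ : 0 < Gamma (((k : ℝ) + 1) / α + ((n : ℝ) + 1)) := Gamma_pos_of_pos (by positivity)
  have hΓα : 0 < Gamma (α * ((n : ℝ) + 1)) := Gamma_pos_of_pos (by positivity)
  have hexp : -(((k : ℝ) + 1) / α) - ((n : ℝ) + 1) ≤ 0 := by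
    have : 0 ≤ ((k : ℝ) + 1) / α := by positivity
    linarith
  have hpow : r ^ (-(((k : ℝ) + 1) / α) - ((n : ℝ) + 1)) =
      (r ^ (-α⁻¹)) ^ (k + 1) * r⁻¹ ^ (n + 1) := by
    rw [rpow_sub hr, ← rpow_natCast, ← rpow_mul hr.le, inv_pow, ← rpow_natCast r]
    push_cast
    ring_nf
  have ht' := rpow_le_rpow_of_nonpos hr ht hexp
  simp only [hSeriesTerm, norm_mul, norm_pow, norm_neg, norm_one, one_pow, one_mul,
    Complex.norm_real, norm_eq_abs, abs_div, abs_mul, abs_of_pos hΓ, abs_of_pos hΓα,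
    Nat.abs_cast, Complex.norm_cpow_real]
  set w : ℝ := -(((k : ℝ) + 1) / α) - ((n : ℝ) + 1)
  calc Gamma (((k : ℝ) + 1) / α + ((n : ℝ) + 1)) / (Gamma (α * ((n : ℝ) + 1)) * (k + 1)!) *
        |sin (π * ((k : ℝ) + 1) / α)| * ‖1 - x‖ ^ (k + 1) * ‖t‖ ^ w
      ≤ (k ! : ℝ) ^ α⁻¹ * Gamma (β * (n + 1)) ^ β⁻¹ / (Gamma (α * ((n : ℝ) + 1)) * (k + 1)!) *
        1 * R ^ (k + 1) * r ^ w := by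
        have hR : 0 ≤ R := (norm_nonneg _).trans hx
        have := Gamma_pos_of_pos (mul_pos hαβ.symm.pos (by positivity : (0 : ℝ) < n + 1))
        gcongr ?_ / _ * ?_ * ?_ ^ _ * ?_
        · simpa only [mul_div_cancel_left₀ _ hαβ.symm.ne_zero, Gamma_nat_eq_factorial] using
          Gamma_div_add_div_le hαβ (s := (k : ℝ) + 1) (t := β * (n + 1)) (by positivity)
            (mul_pos hαβ.symm.pos (by positivity))
        · exact abs_sin_le_one _
    _ = (k ! : ℝ) ^ α⁻¹ / (k + 1)! * (R * r ^ (-α⁻¹)) ^ (k + 1) *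
        (Gamma (β * (n + 1)) ^ β⁻¹ / Gamma (α * (n + 1)) * r⁻¹ ^ (n + 1)) := by
        rw [hpow, mul_pow]
        field_simp

lemma exists_summable_bound_norm_hSeriesTerm {α : ℝ} (hα : 1 < α) {R r : ℝ}
    (hR : 0 ≤ R) (hr : 0 < r) :
    ∃ u : ℕ × ℕ → ℝ, Summable u ∧
      ∀ x t : ℂ, ‖1 - x‖ ≤ R → r ≤ ‖t‖ → ∀ p, ‖hSeriesTerm α x t p‖ ≤ u p := by
  have hαβ := HolderConjugate.conjExponent hα
  refine ⟨_, Summable.mul_of_nonneg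
    (summable_factorial_rpow_div_factorial_succ_mul_pow (inv_lt_one_of_one_lt₀ hα)
      (mul_nonneg hR (rpow_pos_of_pos hr _).le))
    (summable_Gamma_rpow_inv_div_Gamma_mul_pow hα hαβ.symm.pos (inv_nonneg.2 hr.le))
    (fun k => by positivity) (fun n => ?_),
    fun x t hx ht p => norm_hSeriesTerm_le hαβ hx hr ht p.1 p.2⟩
  have := Gamma_pos_of_pos (mul_pos hαβ.symm.pos (by positivity : (0 : ℝ) < n + 1))
  have := Gamma_pos_of_pos (mul_pos hαβ.pos (by positivity : (0 : ℝ) < n + 1))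
  positivity

section hSeries

variable {α : ℝ} (hα : 1 < α)
include hα

lemma summable_norm_hSeriesTerm (x : ℂ) {t : ℂ} (ht : t ≠ 0) :
    Summable fun p => ‖hSeriesTerm α x t p‖ := by
  obtain ⟨u, hu, hle⟩ := exists_summable_bound_norm_hSeriesTerm hα (norm_nonneg (1 - x))
    (norm_pos_iff.2 ht)
  exact hu.of_nonneg_of_le (fun _ => norm_nonneg _) (hle x t le_rfl le_rfl)

lemma differentiable_tsum_hSeriesTerm {t : ℂ} (ht : t ≠ 0) :
    Differentiable ℂ fun x => ∑' p, hSeriesTerm α x t p := by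
  refine differentiableOn_univ.1 (differentiableOn_tsum_of_locally_summable_norm isOpen_univ
    (fun _ => by unfold hSeriesTerm; fun_prop) fun z _ => ?_)
  obtain ⟨u, hu, hle⟩ := exists_summable_bound_norm_hSeriesTerm hα
    (by positivity : 0 ≤ ‖1 - z‖ + 1) (norm_pos_iff.2 ht)
  refine ⟨1, one_pos, u, hu, fun p w hw => hle w t ?_ le_rfl p⟩
  have := Metric.mem_ball'.1 hw
  rw [dist_eq_norm] at this
  linarith [norm_sub_le_norm_sub_add_norm_sub 1 z w]

lemma differentiableOn_slitPlane_tsum_hSeriesTerm (x : ℂ) :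
    DifferentiableOn ℂ (fun t => ∑' p, hSeriesTerm α x t p) Complex.slitPlane := by
  refine differentiableOn_tsum_of_locally_summable_norm Complex.isOpen_slitPlane
    (fun _ => (differentiableOn_id.cpow_const fun _ h => h).const_mul _) fun z hz => ?_
  have hz0 : 0 < ‖z‖ := norm_pos_iff.2 (Complex.slitPlane_ne_zero hz)
  obtain ⟨u, hu, hle⟩ := exists_summable_bound_norm_hSeriesTerm hα (norm_nonneg (1 - x))
    (half_pos hz0)
  refine ⟨‖z‖ / 2, half_pos hz0, u, hu, fun p w hw => hle x w le_rfl ?_ p⟩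
  have := Metric.mem_ball'.1 hw
  rw [dist_eq_norm] at this
  linarith [norm_sub_norm_le z w]

end hSeries

theorem stmt_14 (α : ℝ) (hα : 1 < α ∧ α < 2)
    (term : ℂ → ℂ → ℕ × ℕ → ℂ)
    (hterm : ∀ x t p, term x t p =
      (-1 : ℂ) ^ ((p.1 + 1) + (p.2 + 1)) *
        ((Real.Gamma (((p.1 : ℝ) + 1)/α + ((p.2 : ℝ) + 1)) /
            (Real.Gamma (α * ((p.2 : ℝ) + 1)) * Nat.factorial (p.1 + 1)) : ℝ) : ℂ) *
        ((Real.sin (Real.pi * ((p.1 : ℝ) + 1) / α) : ℝ) : ℂ) *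
        (1 - x) ^ (p.1 + 1) *
        t ^ (((-(((p.1 : ℝ) + 1)/α) - ((p.2 : ℝ) + 1) : ℝ)) : ℂ)) :
    (∀ x t : ℂ, ¬(t.im = 0 ∧ t.re ≤ 0) →
      Summable (fun p : ℕ × ℕ => ‖term x t p‖)) ∧
    (∀ t : ℂ, ¬(t.im = 0 ∧ t.re ≤ 0) →
      Differentiable ℂ (fun x : ℂ => (1/(Real.pi : ℂ)) * ∑' p : ℕ × ℕ, term x t p)) ∧
    (∀ x : ℂ, DifferentiableOn ℂ
      (fun t : ℂ => (1/(Real.pi : ℂ)) * ∑' p : ℕ × ℕ, term x t p)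
      {t : ℂ | ¬(t.im = 0 ∧ t.re ≤ 0)}) := by
  obtain rfl : term = hSeriesTerm α := funext fun x => funext fun t => funext (hterm x t)
  have hslit : {t : ℂ | ¬(t.im = 0 ∧ t.re ≤ 0)} = Complex.slitPlane := by
    ext t
    simp only [mem_ofPred_eq, Complex.mem_slitPlane_iff, not_and_or, not_le]
    tauto
  have hne : ∀ t : ℂ, ¬(t.im = 0 ∧ t.re ≤ 0) → t ≠ 0 := fun t ht =>
    Complex.slitPlane_ne_zero (hslit ▸ ht)
  refine ⟨fun x t ht => summable_norm_hSeriesTerm hα.1 x (hne t ht),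
    fun t ht => (differentiable_tsum_hSeriesTerm hα.1 (hne t ht)).const_mul _, fun x => ?_⟩
  rw [hslit]
  exact (differentiableOn_slitPlane_tsum_hSeriesTerm hα.1 x).const_mul _
end
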